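/- The diagonal functor δ : Δ → Δ × Δ, sending [n] to ([n], [n]), is a final (cofinal) functor; consequently, for every bisimplicial set X : (Δ × Δ)ᵒᵖ → Type, the canonical map colim_{[n] ∈ Δᵒᵖ} X([n],[n]) → colim_{([p],[q]) ∈ (Δ×Δ)ᵒᵖ} X([p],[q]) is a bijection. -/

import Mathlib

open CategoryTheory Limits

namespace DiagFinalAux

open SimplexCategory Simplicial

variable (d : SimplexCategory × SimplexCategory)

/-- the vertex object -/
abbrev V (i : Fin (d.1.len + 1)) (j : Fin (d.2.len + 1)) :
    CostructuredArrow (Functor.diag SimplexCategory) d :=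
  CostructuredArrow.mk (Y := (⦋0⦌ : SimplexCategory)) ((const (⦋0⦌ : SimplexCategory) d.1 i, const (⦋0⦌ : SimplexCategory) d.2 j) :
    (Functor.diag SimplexCategory).obj ⦋0⦌ ⟶ d)

/-- a map [1] → y hitting i then i' -/
def edge {y : SimplexCategory} (i i' : Fin (y.len + 1)) (h : i ≤ i') :
    (⦋1⦌ : SimplexCategory) ⟶ y :=
  Hom.mk ⟨fun t => if t = 0 then i else i', by
    intro a b hab
    fin_cases a <;> fin_cases b <;> simp_all⟩

lemma edge_zero {y : SimplexCategory} (i i' : Fin (y.len + 1)) (h : i ≤ i') :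
    (edge i i' h).toOrderHom 0 = i := rfl

lemma edge_one {y : SimplexCategory} (i i' : Fin (y.len + 1)) (h : i ≤ i') :
    (edge i i' h).toOrderHom 1 = i' := rfl

lemma zigzag_V_left {i i' : Fin (d.1.len + 1)} (j : Fin (d.2.len + 1)) (h : i ≤ i') :
    Zigzag (V d i j) (V d i' j) := by
  let W : CostructuredArrow (Functor.diag SimplexCategory) d :=
    CostructuredArrow.mk (Y := (⦋1⦌ : SimplexCategory))
      ((edge i i' h, const ⦋1⦌ d.2 j) : (Functor.diag SimplexCategory).obj ⦋1⦌ ⟶ d)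
  have h1 : Zag (V d i j) W := by
    left
    refine ⟨CostructuredArrow.homMk (const (⦋0⦌ : SimplexCategory) ⦋1⦌ 0) ?_⟩
    exact Prod.ext (Hom.ext_zero_left _ _) (Hom.ext_zero_left _ _)
  have h2 : Zag W (V d i' j) := by
    right
    refine ⟨CostructuredArrow.homMk (const (⦋0⦌ : SimplexCategory) ⦋1⦌ 1) ?_⟩
    exact Prod.ext (Hom.ext_zero_left _ _) (Hom.ext_zero_left _ _)
  exact (Relation.ReflTransGen.single h1).trans (Relation.ReflTransGen.single h2)

lemma zigzag_V_right (i : Fin (d.1.len + 1)) {j j' : Fin (d.2.len + 1)} (h : j ≤ j') :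
    Zigzag (V d i j) (V d i j') := by
  let W : CostructuredArrow (Functor.diag SimplexCategory) d :=
    CostructuredArrow.mk (Y := (⦋1⦌ : SimplexCategory))
      ((const ⦋1⦌ d.1 i, edge j j' h) : (Functor.diag SimplexCategory).obj ⦋1⦌ ⟶ d)
  have h1 : Zag (V d i j) W := by
    left
    refine ⟨CostructuredArrow.homMk (const (⦋0⦌ : SimplexCategory) ⦋1⦌ 0) ?_⟩
    exact Prod.ext (Hom.ext_zero_left _ _) (Hom.ext_zero_left _ _)
  have h2 : Zag W (V d i j') := by
    right
    refine ⟨CostructuredArrow.homMk (const (⦋0⦌ : SimplexCategory) ⦋1⦌ 1) ?_⟩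
    exact Prod.ext (Hom.ext_zero_left _ _) (Hom.ext_zero_left _ _)
  exact (Relation.ReflTransGen.single h1).trans (Relation.ReflTransGen.single h2)

lemma zigzag_V_left' (i i' : Fin (d.1.len + 1)) (j : Fin (d.2.len + 1)) :
    Zigzag (V d i j) (V d i' j) := by
  rcases le_total i i' with h | h
  · exact zigzag_V_left d j h
  · exact (zigzag_V_left d j h).symm

lemma zigzag_V_right' (i : Fin (d.1.len + 1)) (j j' : Fin (d.2.len + 1)) :
    Zigzag (V d i j) (V d i j') := by
  rcases le_total j j' with h | h
  · exact zigzag_V_right d i h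
  · exact (zigzag_V_right d i h).symm

lemma zigzag_to_V (X : CostructuredArrow (Functor.diag SimplexCategory) d) :
    Zigzag X (V d (X.hom.1.toOrderHom 0) (X.hom.2.toOrderHom 0)) := by
  refine Relation.ReflTransGen.single (Or.inr ?_)
  refine ⟨CostructuredArrow.homMk (const (⦋0⦌ : SimplexCategory) X.left 0) ?_⟩
  exact Prod.ext (Hom.ext_zero_left _ _) (Hom.ext_zero_left _ _)

instance : (Functor.diag SimplexCategory).Initial := by
  constructor
  intro d
  have : Nonempty (CostructuredArrow (Functor.diag SimplexCategory) d) := ⟨V d 0 0⟩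
  apply zigzag_isConnected
  intro X Y
  refine (zigzag_to_V d X).trans (Relation.ReflTransGen.trans ?_ (zigzag_to_V d Y).symm)
  exact (zigzag_V_left' d _ _ _).trans (zigzag_V_right' d _ _ _)

end DiagFinalAux

/-- The diagonal functor `δ : Δ → Δ × Δ` is final in the sense relevant for colimits of
contravariant functors: `δᵒᵖ : Δᵒᵖ → Δᵒᵖ × Δᵒᵖ` is final, and hence for every bisimplicial
set `X` the canonical comparison map `colim_n X([n],[n]) → colim_{p,q} X([p],[q])` is a
bijection. -/
theorem diagonal_final :
    (Functor.diag SimplexCategory).op.Final ∧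
    ∀ X : (SimplexCategory × SimplexCategory)ᵒᵖ ⥤ Type,
      Function.Bijective (colimit.pre X (Functor.diag SimplexCategory).op) := by
  have hF : (Functor.diag SimplexCategory).op.Final := inferInstance
  refine ⟨hF, fun X => ?_⟩
  rw [← isIso_iff_bijective]
  infer_instance
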